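/- arXiv:1906.01469 — 4 statements merged into one kernel-verified Lean document; each statement's English description precedes it below -/
import Mathlib

section
/- Let G and H be perfect graphs on vertex set [d]. The unconditional reflexive polytopes U(P_G) and U(P_H) are unimodularly equivalent (i.e., related by a map x ↦ Wx + t with W ∈ SL_d(ℤ), t ∈ ℤ^d) if and only if G and H are isomorphic graphs. -/
open Finset

/-- Dot product on `ℝ^d`. -/
def dot {d : ℕ} (x y : Fin d → ℝ) : ℝ := ∑ i, x i * y i

/-- Coordinatewise absolute value. -/
def absVec {d : ℕ} (p : Fin d → ℝ) : Fin d → ℝ := fun i => |p i|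

/-- A vector of signs `±1`. -/
def IsSignVec {d : ℕ} (σ : Fin d → ℝ) : Prop := ∀ i, σ i = 1 ∨ σ i = -1

/-- Coordinatewise sign flip. -/
def sflip {d : ℕ} (σ p : Fin d → ℝ) : Fin d → ℝ := fun i => σ i * p i

/-- A set is unconditional if it is closed under coordinate sign flips. -/
def Unconditional {d : ℕ} (K : Set (Fin d → ℝ)) : Prop :=
  ∀ σ : Fin d → ℝ, IsSignVec σ → ∀ p ∈ K, sflip σ p ∈ K

/-- A (nonempty) polytope: the convex hull of a nonempty finite set. -/
def IsPolytope {d : ℕ} (P : Set (Fin d → ℝ)) : Prop :=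
  ∃ V : Finset (Fin d → ℝ), V.Nonempty ∧ P = convexHull ℝ (V : Set (Fin d → ℝ))

/-- The nonnegative orthant of `ℝ^d`. -/
def nonnegOrthant (d : ℕ) : Set (Fin d → ℝ) := {x | ∀ i, 0 ≤ x i}

/-- An anti-blocking polytope: a polytope in the nonnegative orthant that is
down-closed with respect to the componentwise order. -/
def IsAntiBlocking {d : ℕ} (P : Set (Fin d → ℝ)) : Prop :=
  IsPolytope P ∧ P ⊆ nonnegOrthant d ∧
    ∀ q ∈ P, ∀ p : Fin d → ℝ, (∀ i, 0 ≤ p i ∧ p i ≤ q i) → p ∈ P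

/-- The unconditional set associated to a set `P`: all points whose vector of
absolute values lies in `P`. -/
def UPoly {d : ℕ} (P : Set (Fin d → ℝ)) : Set (Fin d → ℝ) := {p | absVec p ∈ P}

/-- Cast an integer vector to a real vector. -/
def intCast {d : ℕ} (a : Fin d → ℤ) : Fin d → ℝ := fun i => (a i : ℝ)

/-- A lattice polytope: convex hull of a nonempty finite set of integer points. -/
def IsLatticePolytope {d : ℕ} (P : Set (Fin d → ℝ)) : Prop :=
  ∃ V : Finset (Fin d → ℤ), V.Nonempty ∧ P = convexHull ℝ (intCast '' (V : Set (Fin d → ℤ)))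

/-- Reflexive polytope: `0` is interior and `P` is cut out by integral
inequalities with right-hand side `1`. -/
def IsReflexive {d : ℕ} (P : Set (Fin d → ℝ)) : Prop :=
  0 ∈ interior P ∧
    ∃ A : Finset (Fin d → ℤ), P = {x | ∀ a ∈ A, dot (intCast a) x ≤ 1}

/-- Indicator vector of a subset of `[d]`. -/
def indVec {d : ℕ} (s : Finset (Fin d)) : Fin d → ℝ := fun i => if i ∈ s then 1 else 0

/-- A stable (independent) set of a graph. -/
def IsStableSet {d : ℕ} (G : SimpleGraph (Fin d)) (s : Finset (Fin d)) : Prop :=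
  ∀ i ∈ s, ∀ j ∈ s, ¬ G.Adj i j

/-- The stable set polytope: convex hull of indicator vectors of stable sets. -/
def stableSetPolytope {d : ℕ} (G : SimpleGraph (Fin d)) : Set (Fin d → ℝ) :=
  convexHull ℝ {x | ∃ s : Finset (Fin d), IsStableSet G s ∧ x = indVec s}

/-- The clique number of a graph, as an extended natural number. -/
noncomputable def cliqueNumber {V : Type*} (G : SimpleGraph V) : ℕ∞ :=
  sSup {n : ℕ∞ | ∃ (m : ℕ) (t : Finset V), n = (m : ℕ∞) ∧ G.IsNClique m t}

/-- A graph is perfect if every induced subgraph has clique number equal to its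
chromatic number. -/
def IsPerfect {d : ℕ} (G : SimpleGraph (Fin d)) : Prop :=
  ∀ s : Set (Fin d), cliqueNumber (G.induce s) = (G.induce s).chromaticNumber

/-- Two subsets of `ℝ^d` are unimodularly equivalent if one is the image of the
other under `x ↦ Wx + t` with `W ∈ SL_d(ℤ)` and `t ∈ ℤ^d`. -/
def UnimodularlyEquivalent {d : ℕ} (P Q : Set (Fin d → ℝ)) : Prop :=
  ∃ (W : Matrix (Fin d) (Fin d) ℤ) (t : Fin d → ℤ), W.det = 1 ∧
    (fun x => (W.map (fun z : ℤ => (z : ℝ))).mulVec x + intCast t) '' P = Q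

/-!
Both `U(P_G)` and `U(P_H)` are symmetric about `0` and lie in the cube `[-1, 1]^d`. If
`f x = W x + t` maps one onto the other, then `t = f 0` and `-t` lie in `U(P_H)`, say
`-t = f a`, and then `f (-a) = 3 t` lies in the cube, so `t = 0`. Hence `W` restricts to a
bijection between the lattice points, which are the signed indicator vectors of stable sets.
Among them the points `±e_i` are characterised additively (a nonzero `a` such that `b` and
`a - 2 b` are lattice points only for `b = 0` and `b = a`), so `W e_i = ±e_{φ i}` for a
permutation `φ`; as `±e_i ± e_j` is a lattice point exactly when `i` and `j` are not adjacent,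
`φ` is a graph isomorphism. Conversely, an isomorphism gives a signed permutation matrix,
whose signs can be chosen to make its determinant `1`.
-/

def IsIndecomposable {M : Type*} [AddCommGroup M] (S : Set M) (a : M) : Prop :=
  a ∈ S ∧ a ≠ 0 ∧ ∀ b ∈ S, a - 2 • b ∈ S → b = 0 ∨ b = a

lemma IsIndecomposable.map {M N : Type*} [AddCommGroup M] [AddCommGroup N] {S : Set M}
    {T : Set N} {f : M →+ N} (hf : Function.Injective f) (hST : f '' S = T) {a : M}
    (ha : IsIndecomposable S a) : IsIndecomposable T (f a) := by
  have hmem : ∀ x, f x ∈ T ↔ x ∈ S := fun x => by rw [← hST, hf.mem_set_image]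
  obtain ⟨haS, ha0, hmin⟩ := ha
  refine ⟨(hmem a).2 haS, (map_ne_zero_iff f hf).2 ha0, fun c hc hac => ?_⟩
  rw [← hST] at hc
  obtain ⟨b, hb, rfl⟩ := hc
  rw [← map_nsmul, ← map_sub, hmem] at hac
  rcases hmin b hb hac with rfl | rfl
  · exact Or.inl (map_zero f)
  · exact Or.inr rfl

lemma three_smul_mem_of_image_eq {E F : Type*} [AddCommGroup E] [AddCommGroup F] (A : E →+ F)
    (t : F) {U : Set E} {V : Set F} (hU0 : 0 ∈ U) (hU : ∀ x ∈ U, -x ∈ U) (hV : ∀ y ∈ V, -y ∈ V)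
    (h : (fun x => A x + t) '' U = V) : 3 • t ∈ V := by
  have ht : t ∈ V := h ▸ ⟨0, hU0, by simp⟩
  obtain ⟨a, ha, hat⟩ : -t ∈ (fun x => A x + t) '' U := h ▸ hV t ht
  have hAa : A a = -t - t := eq_sub_of_add_eq hat
  have h3 : A (-a) + t = 3 • t := by
    rw [map_neg, hAa]
    abel
  exact h ▸ h3 ▸ ⟨-a, hU a ha, rfl⟩

lemma exists_abs_eq_one_prod_eq_sign {α : Type*} [Fintype α] [DecidableEq α]
    (σ : Equiv.Perm α) : ∃ ε : α → ℤ, (∀ i, |ε i| = 1) ∧ ∏ i, ε i = Equiv.Perm.sign σ := by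
  rcases isEmpty_or_nonempty α with hα | ⟨⟨i₀⟩⟩
  · exact ⟨1, by simp, by simp [Subsingleton.elim σ 1]⟩
  · refine ⟨Pi.mulSingle i₀ (Equiv.Perm.sign σ : ℤ), fun i => ?_, by simp⟩
    rcases eq_or_ne i i₀ with rfl | h
    · simp
    · simp [h]

lemma map_diagonal_mul_permMatrix_mulVec {n : Type*} [Fintype n] [DecidableEq n] (ε : n → ℤ)
    (σ : Equiv.Perm n) (x : n → ℝ) :
    ((Matrix.diagonal ε * σ.permMatrix ℤ).map (fun z : ℤ => (z : ℝ))).mulVec x =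
      fun k => ε k * x (σ k) := by
  change ((Matrix.diagonal ε * σ.permMatrix ℤ).map (Int.castRingHom ℝ)).mulVec x = _
  rw [Matrix.map_mul, Matrix.diagonal_map (map_zero _), Equiv.Perm.permMatrix,
    PEquiv.map_toMatrix, ← Equiv.Perm.permMatrix, ← Matrix.mulVec_mulVec,
    Matrix.permMatrix_mulVec]
  exact funext (Matrix.mulVec_diagonal _ _)

def latticePoints {d : ℕ} (K : Set (Fin d → ℝ)) : Set (Fin d → ℤ) := intCast ⁻¹' K

lemma intCast_mulVec {d : ℕ} (W : Matrix (Fin d) (Fin d) ℤ) (a : Fin d → ℤ) :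
    (W.map (fun z : ℤ => (z : ℝ))).mulVec (intCast a) = intCast (W.mulVec a) :=
  funext fun i => (RingHom.map_mulVec (Int.castRingHom ℝ) W a i).symm

lemma image_latticePoints_of_image_eq {d : ℕ} {W : Matrix (Fin d) (Fin d) ℤ} (hW : W.det = 1)
    {K K' : Set (Fin d → ℝ)} (h : (W.map (fun z : ℤ => (z : ℝ))).mulVec '' K = K') :
    W.mulVec '' latticePoints K = latticePoints K' := by
  have hWW : W * W⁻¹ = 1 := W.mul_nonsing_inv (by simp [hW])
  have hinj : Function.Injective (W.map (fun z : ℤ => (z : ℝ))).mulVec := by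
    refine Matrix.mulVec_injective_iff_isUnit.2 ((Matrix.isUnit_iff_isUnit_det _).2 ?_)
    have hdet := RingHom.map_det (Int.castRingHom ℝ) W
    simp only [hW, eq_intCast, Int.cast_one, RingHom.mapMatrix_apply] at hdet
    change IsUnit (W.map (Int.castRingHom ℝ)).det
    exact hdet ▸ isUnit_one
  ext b
  constructor
  · rintro ⟨a, ha, rfl⟩
    change intCast (W.mulVec a) ∈ K'
    rw [← intCast_mulVec, ← h]
    exact Set.mem_image_of_mem _ ha
  · intro hb
    change intCast b ∈ K' at hb
    rw [← h] at hb
    obtain ⟨x, hx, hxb⟩ := hb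
    refine ⟨W⁻¹.mulVec b, ?_, by rw [Matrix.mulVec_mulVec, hWW, Matrix.one_mulVec]⟩
    have hx_eq : x = intCast (W⁻¹.mulVec b) := hinj (by
      rw [hxb, intCast_mulVec, Matrix.mulVec_mulVec, hWW, Matrix.one_mulVec])
    change intCast _ ∈ K
    rwa [← hx_eq]

section StableSetPolytope

variable {d : ℕ} {G H : SimpleGraph (Fin d)}

lemma neg_mem_UPoly {P : Set (Fin d → ℝ)} {x : Fin d → ℝ} (hx : x ∈ UPoly P) : -x ∈ UPoly P := by
  have h : absVec (-x) = absVec x := funext fun i => abs_neg (x i)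
  change absVec (-x) ∈ P
  rwa [h]

lemma indVec_mem_stableSetPolytope {s : Finset (Fin d)} (hs : IsStableSet G s) :
    indVec s ∈ stableSetPolytope G :=
  subset_convexHull ℝ _ ⟨s, hs, rfl⟩

lemma stableSetPolytope_subset_halfSpace (ℓ : (Fin d → ℝ) →ₗ[ℝ] ℝ) {c : ℝ}
    (h : ∀ s, IsStableSet G s → ℓ (indVec s) ≤ c) : stableSetPolytope G ⊆ {x | ℓ x ≤ c} :=
  convexHull_min (by rintro _ ⟨s, hs, rfl⟩; exact h s hs) (convex_halfSpace_le ℓ.isLinear c)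

lemma apply_le_one_of_mem_stableSetPolytope {x : Fin d → ℝ} (hx : x ∈ stableSetPolytope G)
    (i : Fin d) : x i ≤ 1 :=
  stableSetPolytope_subset_halfSpace (LinearMap.proj i)
    (fun s _ => by simp only [LinearMap.proj_apply, indVec]; split_ifs <;> norm_num) hx

lemma add_le_one_of_mem_stableSetPolytope {x : Fin d → ℝ} (hx : x ∈ stableSetPolytope G)
    {i j : Fin d} (hij : G.Adj i j) : x i + x j ≤ 1 := by
  refine stableSetPolytope_subset_halfSpace
    (LinearMap.proj (R := ℝ) (φ := fun _ => ℝ) i + LinearMap.proj j) (fun s hs => ?_) hx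
  simp only [LinearMap.add_apply, LinearMap.proj_apply, indVec]
  split_ifs with hi hj
  exacts [absurd hij (hs i hi j hj), by norm_num, by norm_num, by norm_num]

lemma zero_mem_UPoly_stableSetPolytope : (0 : Fin d → ℝ) ∈ UPoly (stableSetPolytope G) := by
  have h : absVec (0 : Fin d → ℝ) = indVec ∅ := funext fun i => by simp [absVec, indVec]
  change absVec (0 : Fin d → ℝ) ∈ stableSetPolytope G
  rw [h]
  exact indVec_mem_stableSetPolytope (by simp [IsStableSet])

lemma mem_latticePoints_UPoly_stableSetPolytope {a : Fin d → ℤ} :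
    a ∈ latticePoints (UPoly (stableSetPolytope G)) ↔
      (∀ i, |a i| ≤ 1) ∧ ∀ i j, a i ≠ 0 → a j ≠ 0 → ¬ G.Adj i j := by
  have habs : ∀ i, absVec (intCast a) i = ((|a i| : ℤ) : ℝ) := fun i => by
    simp [absVec, intCast]
  constructor
  · intro ha
    refine ⟨fun i => ?_, fun i j hi hj hij => ?_⟩
    · exact_mod_cast habs i ▸ apply_le_one_of_mem_stableSetPolytope ha i
    · have h := add_le_one_of_mem_stableSetPolytope ha hij
      rw [habs, habs] at h
      have hsum : |a i| + |a j| ≤ 1 := by exact_mod_cast h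
      linarith [Int.one_le_abs hi, Int.one_le_abs hj]
  · rintro ⟨hle, hstab⟩
    have h : absVec (intCast a) = indVec {i | a i ≠ 0} := funext fun i => by
      rw [habs]
      simp only [indVec, Finset.mem_filter, Finset.mem_univ, true_and]
      split_ifs with hi
      · exact_mod_cast le_antisymm (hle i) (Int.one_le_abs hi)
      · simp_all
    change absVec (intCast a) ∈ stableSetPolytope G
    rw [h]
    exact indVec_mem_stableSetPolytope fun i hi j hj => by
      simp only [Finset.mem_filter, Finset.mem_univ, true_and] at hi hj
      exact hstab i j hi hj

local notation "𝓛" G:max => latticePoints (UPoly (stableSetPolytope G))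

lemma single_mem_latticePoints (i : Fin d) {s : ℤ} (hs : |s| ≤ 1) : Pi.single i s ∈ 𝓛 G := by
  refine mem_latticePoints_UPoly_stableSetPolytope.2 ⟨fun k => ?_, fun k l hk hl => ?_⟩
  · rcases eq_or_ne k i with rfl | hki <;> simp [*]
  · obtain rfl : k = i := by by_contra h; simp [h] at hk
    obtain rfl : l = k := by by_contra h; simp [h] at hl
    exact G.irrefl

lemma isIndecomposable_single_one (i : Fin d) : IsIndecomposable (𝓛 G) (Pi.single i 1) := by
  refine ⟨single_mem_latticePoints i (by simp), by simp, fun b _ hb => ?_⟩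
  have hle := (mem_latticePoints_UPoly_stableSetPolytope.1 hb).1
  have hoff : ∀ k ≠ i, b k = 0 := fun k hk => by
    have := abs_le.1 (hle k)
    simp [hk] at this
    omega
  have hbi : b i = 0 ∨ b i = 1 := by
    have := abs_le.1 (hle i)
    simp at this
    omega
  have hb_eq : b = Pi.single i (b i) := funext fun k => by
    rcases eq_or_ne k i with rfl | hki <;> simp [*]
  rcases hbi with h | h <;> rw [h] at hb_eq <;> simp [hb_eq]

lemma IsIndecomposable.exists_eq_single {a : Fin d → ℤ} (ha : IsIndecomposable (𝓛 G) a) :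
    ∃ i s, |s| = 1 ∧ a = Pi.single i s := by
  obtain ⟨haL, ha0, hmin⟩ := ha
  obtain ⟨hle, hstab⟩ := mem_latticePoints_UPoly_stableSetPolytope.1 haL
  obtain ⟨i, hi⟩ : ∃ i, a i ≠ 0 := by
    by_contra! h
    exact ha0 (funext h)
  -- subtracting `2 a_i e_i` flips the sign of the `i`-th entry and keeps the support
  have hflip : a - 2 • Pi.single i (a i) ∈ 𝓛 G := by
    refine mem_latticePoints_UPoly_stableSetPolytope.2 ⟨fun k => ?_, fun k l hk hl => ?_⟩
    · rcases eq_or_ne k i with rfl | hki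
      · simpa [show a k - 2 * a k = -a k by ring] using hle k
      · simpa [hki] using hle k
    · refine hstab k l ?_ ?_
      · rcases eq_or_ne k i with rfl | hki <;> simp_all
      · rcases eq_or_ne l i with rfl | hli <;> simp_all
  rcases hmin _ (single_mem_latticePoints i (hle i)) hflip with h | h
  · exact absurd (by simpa using congrFun h i) hi
  · exact ⟨i, a i, le_antisymm (hle i) (Int.one_le_abs hi), h.symm⟩

lemma single_add_single_mem_latticePoints_iff {i j : Fin d} (hij : i ≠ j) {s t : ℤ}
    (hs : |s| = 1) (ht : |t| = 1) : Pi.single i s + Pi.single j t ∈ 𝓛 G ↔ ¬ G.Adj i j := by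
  have hs0 : s ≠ 0 := by rintro rfl; simp at hs
  have ht0 : t ≠ 0 := by rintro rfl; simp at ht
  have hsupp : ∀ k, (Pi.single i s + Pi.single j t : Fin d → ℤ) k ≠ 0 → k = i ∨ k = j := by
    intro k hk
    by_contra! h
    simp [h.1, h.2] at hk
  rw [mem_latticePoints_UPoly_stableSetPolytope]
  constructor
  · rintro ⟨-, hstab⟩
    exact hstab i j (by simp [hij, hs0]) (by simp [hij.symm, ht0])
  · intro hadj
    refine ⟨fun k => ?_, fun k l hk hl => ?_⟩
    · rcases eq_or_ne k i with rfl | hki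
      · simp [hij, hs]
      · rcases eq_or_ne k j with rfl | hkj <;> simp [*]
    · rcases hsupp k hk with rfl | rfl <;> rcases hsupp l hl with rfl | rfl
      exacts [G.irrefl, hadj, fun h => hadj h.symm, G.irrefl]

lemma nonempty_iso_of_image_latticePoints {f : (Fin d → ℤ) →+ (Fin d → ℤ)}
    (hf : Function.Injective f) (hL : f '' 𝓛 G = 𝓛 H) : Nonempty (G ≃g H) := by
  have hmem : ∀ x, f x ∈ 𝓛 H ↔ x ∈ 𝓛 G := fun x => by rw [← hL, hf.mem_set_image]
  choose φ s hs hφ using fun i : Fin d =>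
    ((isIndecomposable_single_one (G := G) i).map hf hL).exists_eq_single
  have hφ_inj : Function.Injective φ := by
    intro i j hij
    by_contra hne
    have hdep : f (s j • Pi.single i 1 - s i • Pi.single j 1) = 0 := by
      rw [map_sub, map_zsmul, map_zsmul, hφ, hφ, hij, ← Pi.single_smul, ← Pi.single_smul,
        smul_eq_mul, smul_eq_mul, mul_comm, sub_self]
    have hsj : s j = 0 := by simpa [hne] using congrFun ((map_eq_zero_iff f hf).1 hdep) i
    simpa [hsj] using hs j
  have hadj : ∀ i j, H.Adj (φ i) (φ j) ↔ G.Adj i j := by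
    intro i j
    rcases eq_or_ne i j with rfl | hij
    · simp
    · rw [← not_iff_not, ← single_add_single_mem_latticePoints_iff hij abs_one abs_one,
        ← single_add_single_mem_latticePoints_iff (hφ_inj.ne hij) (hs i) (hs j), ← hφ, ← hφ,
        ← map_add, hmem]
  exact ⟨⟨Equiv.ofBijective φ hφ_inj.bijective_of_finite, hadj _ _⟩⟩

lemma translation_eq_zero {W : Matrix (Fin d) (Fin d) ℤ} {t : Fin d → ℤ}
    (h : (fun x => (W.map (fun z : ℤ => (z : ℝ))).mulVec x + intCast t) ''
      UPoly (stableSetPolytope G) = UPoly (stableSetPolytope H)) : t = 0 := by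
  have h3 := three_smul_mem_of_image_eq (W.map (fun z : ℤ => (z : ℝ))).mulVecLin.toAddMonoidHom
    (intCast t) zero_mem_UPoly_stableSetPolytope (fun _ => neg_mem_UPoly)
    (fun _ => neg_mem_UPoly) h
  funext i
  have hi := apply_le_one_of_mem_stableSetPolytope h3 i
  simp only [absVec, Pi.smul_apply, intCast, nsmul_eq_mul] at hi
  have hi' : |3 * t i| ≤ 1 := by exact_mod_cast hi
  rw [abs_le] at hi'
  simp only [Pi.zero_apply]
  omega

lemma nonempty_iso_of_unimodularlyEquivalent
    (h : UnimodularlyEquivalent (UPoly (stableSetPolytope G)) (UPoly (stableSetPolytope H))) :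
    Nonempty (G ≃g H) := by
  obtain ⟨W, t, hdet, himg⟩ := h
  obtain rfl := translation_eq_zero himg
  have hW : W⁻¹ * W = 1 := W.nonsing_inv_mul (by simp [hdet])
  have h0 : intCast (0 : Fin d → ℤ) = 0 := funext fun _ => Int.cast_zero
  refine nonempty_iso_of_image_latticePoints (f := W.mulVecLin.toAddMonoidHom)
    (fun a b hab => ?_) (image_latticePoints_of_image_eq hdet (by simpa [h0] using himg))
  simpa [hW] using congrArg W⁻¹.mulVec hab

lemma comp_symm_mem_stableSetPolytope (e : G ≃g H) {x : Fin d → ℝ}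
    (hx : x ∈ stableSetPolytope G) : x ∘ e.symm ∈ stableSetPolytope H := by
  let T : (Fin d → ℝ) →ₗ[ℝ] (Fin d → ℝ) := LinearMap.funLeft ℝ ℝ e.symm
  have hT : T '' stableSetPolytope G ⊆ stableSetPolytope H := by
    rw [stableSetPolytope, LinearMap.image_convexHull]
    refine convexHull_mono ?_
    rintro _ ⟨_, ⟨s, hs, rfl⟩, rfl⟩
    refine ⟨s.map e.toEquiv.toEmbedding, fun k hk l hl hkl => ?_, ?_⟩
    · rw [Finset.mem_map_equiv] at hk hl
      exact hs _ hk _ hl (e.symm.map_adj_iff.2 hkl)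
    · funext k
      simp only [T, LinearMap.funLeft_apply, indVec, Finset.mem_map_equiv]
      rfl
  exact hT ⟨x, hx, rfl⟩

lemma comp_symm_mem_stableSetPolytope_iff (e : G ≃g H) {x : Fin d → ℝ} :
    x ∘ e.symm ∈ stableSetPolytope H ↔ x ∈ stableSetPolytope G :=
  ⟨fun h => by simpa [Function.comp_assoc] using comp_symm_mem_stableSetPolytope e.symm h,
    comp_symm_mem_stableSetPolytope e⟩

lemma unimodularlyEquivalent_of_iso (e : G ≃g H) :
    UnimodularlyEquivalent (UPoly (stableSetPolytope G)) (UPoly (stableSetPolytope H)) := by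
  let σ : Equiv.Perm (Fin d) := e.symm.toEquiv
  obtain ⟨ε, hε, hprod⟩ := exists_abs_eq_one_prod_eq_sign σ
  let W := Matrix.diagonal ε * σ.permMatrix ℤ
  have hdet : W.det = 1 := by
    rw [Matrix.det_mul, Matrix.det_diagonal, Matrix.det_permutation, hprod]
    push_cast
    rw [← Units.val_mul, Int.units_mul_self, Units.val_one]
  have hεε : ∀ k, (ε k : ℝ) * ε k = 1 := fun k => by
    exact_mod_cast (abs_mul_abs_self (ε k)).symm.trans (by rw [hε k, one_mul])
  let f : (Fin d → ℝ) → (Fin d → ℝ) := fun x k => ε k * x (σ k)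
  have hf : (fun x => (W.map (fun z : ℤ => (z : ℝ))).mulVec x + intCast 0) = f := by
    funext x
    rw [show intCast (0 : Fin d → ℤ) = 0 from funext fun _ => Int.cast_zero, add_zero]
    exact map_diagonal_mul_permMatrix_mulVec ε σ x
  have hf_mem : ∀ x, f x ∈ UPoly (stableSetPolytope H) ↔ x ∈ UPoly (stableSetPolytope G) := by
    intro x
    have habs : absVec (f x) = absVec x ∘ e.symm := funext fun k => by
      simp [f, absVec, abs_mul, σ, ← Int.cast_abs, hε]
    change absVec (f x) ∈ stableSetPolytope H ↔ absVec x ∈ stableSetPolytope G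
    rw [habs]
    exact comp_symm_mem_stableSetPolytope_iff e
  refine ⟨W, 0, hdet, hf ▸ Set.ext fun y => ⟨?_, fun hy => ?_⟩⟩
  · rintro ⟨x, hx, rfl⟩
    exact (hf_mem x).2 hx
  · let x : Fin d → ℝ := fun l => ε (σ.symm l) * y (σ.symm l)
    have hx : f x = y := funext fun k => by simp [f, x, ← mul_assoc, hεε]
    exact ⟨x, (hf_mem x).1 (by rwa [hx]), hx⟩

end StableSetPolytope

theorem stmt12_general {d : ℕ} (G H : SimpleGraph (Fin d)) :
    UnimodularlyEquivalent (UPoly (stableSetPolytope G)) (UPoly (stableSetPolytope H)) ↔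
      Nonempty (G ≃g H) :=
  ⟨nonempty_iso_of_unimodularlyEquivalent, fun ⟨e⟩ => unimodularlyEquivalent_of_iso e⟩

/-- for perfect graphs `G`, `H` on `[d]`, the unconditional
reflexive polytopes `U(P_G)` and `U(P_H)` are unimodularly equivalent iff
`G ≅ H`. -/
theorem stmt12 {d : ℕ} (G H : SimpleGraph (Fin d)) (hG : IsPerfect G)
    (hH : IsPerfect H) :
    UnimodularlyEquivalent (UPoly (stableSetPolytope G)) (UPoly (stableSetPolytope H)) ↔
      Nonempty (G ≃g H) :=
  stmt12_general G H
end

section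
/- Every unconditional reflexive polytope P ⊂ ℝ^d satisfies C_d* ⊆ P ⊆ C_d, where C_d = [−1,1]^d is the cube and C_d* = conv{±e_1,...,±e_d} the crosspolytope. -/
open Finset

/-! Write `e i` for `Pi.single i 1`. Unconditionality and convexity put the axis point `|x i| • e i`
into `P` for every `x ∈ P`. Since `0` is interior, some lattice vertex `v` has `v i ≠ 0`, hence
`|v i| ≥ 1`, and shrinking `|v i| • e i` towards `0` gives `e i ∈ P`; together with `-e i ∈ P`
this gives the crosspolytope. Since `P` is bounded, some facet normal `a` must have `a i > 0`,
i.e. `a i ≥ 1`, and then `|x i| ≤ |x i| * a i ≤ 1` for every `x ∈ P`: this gives the cube. -/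

variable {d : ℕ}

lemma dot_smul_single (a : Fin d → ℝ) (i : Fin d) (t : ℝ) :
    dot a (t • (Pi.single i 1 : Fin d → ℝ)) = t * a i := by
  simp [dot, Pi.single_apply, mul_comm]

namespace Unconditional

variable {K : Set (Fin d → ℝ)}

lemma neg_mem (hK : Unconditional K) {p : Fin d → ℝ} (hp : p ∈ K) : -p ∈ K := by
  convert hK (fun _ => -1) (fun _ => Or.inr rfl) p hp using 1
  funext j
  simp [sflip]

/-- `p i • e i` is the midpoint of `p` and its flip in all coordinates but `i`. -/
lemma apply_smul_single_mem (hK : Unconditional K) (hconv : Convex ℝ K) {p : Fin d → ℝ}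
    (hp : p ∈ K) (i : Fin d) : p i • (Pi.single i 1 : Fin d → ℝ) ∈ K := by
  have hflip := hK (fun j => if j = i then 1 else -1)
    (fun j => by by_cases h : j = i <;> simp [h]) p hp
  convert hconv hp hflip (by norm_num : (0 : ℝ) ≤ 1 / 2) (by norm_num : (0 : ℝ) ≤ 1 / 2)
    (by norm_num) using 1
  funext j
  rcases eq_or_ne j i with rfl | h
  · simp only [Pi.smul_apply, Pi.single_eq_same, smul_eq_mul, mul_one, one_div, Pi.add_apply,
      sflip, ↓reduceIte, one_mul]
    ring
  · simp [sflip, h]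

lemma abs_apply_smul_single_mem (hK : Unconditional K) (hconv : Convex ℝ K) {p : Fin d → ℝ}
    (hp : p ∈ K) (i : Fin d) : |p i| • (Pi.single i 1 : Fin d → ℝ) ∈ K := by
  have h := hK.apply_smul_single_mem hconv hp i
  rcases abs_choice (p i) with habs | habs <;> rw [habs]
  · exact h
  · simpa [neg_smul] using hK.neg_mem h

end Unconditional

lemma interior_setOf_apply_eq_zero {ι : Type*} (i : ι) :
    interior {x : ι → ℝ | x i = 0} = ∅ := by
  have h := (isOpenMap_eval (X := fun _ : ι => ℝ) i).preimage_interior_eq_interior_preimage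
    (continuous_apply i) {0}
  rw [interior_singleton, Set.preimage_empty] at h
  exact h.symm

lemma exists_mem_apply_ne_zero {ι : Type*} {S : Set (ι → ℝ)}
    (hS : (interior (convexHull ℝ S)).Nonempty) (i : ι) : ∃ v ∈ S, v i ≠ 0 := by
  by_contra! h
  have hsub : convexHull ℝ S ⊆ {x : ι → ℝ | x i = 0} :=
    convexHull_min h (convex_hyperplane (LinearMap.proj (R := ℝ) i).isLinear 0)
  simpa [interior_setOf_apply_eq_zero] using hS.mono (interior_mono hsub)

lemma exists_smul_notMem_of_isBounded {E : Type*} [NormedAddCommGroup E] [NormedSpace ℝ E]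
    {s : Set E} (hs : Bornology.IsBounded s) {v : E} (hv : v ≠ 0) :
    ∃ t : ℝ, 0 ≤ t ∧ t • v ∉ s := by
  obtain ⟨C, hC⟩ := isBounded_iff_forall_norm_le.1 hs
  have hv' : 0 < ‖v‖ := norm_pos_iff.2 hv
  refine ⟨(|C| + 1) / ‖v‖, by positivity, fun hmem => ?_⟩
  have := hC _ hmem
  rw [norm_smul, Real.norm_of_nonneg (by positivity), div_mul_cancel₀ _ hv'.ne'] at this
  linarith [le_abs_self C]

lemma exists_one_le_apply_of_isBounded {A : Finset (Fin d → ℤ)}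
    (hA : Bornology.IsBounded {x : Fin d → ℝ | ∀ a ∈ A, dot (intCast a) x ≤ 1}) (i : Fin d) :
    ∃ a ∈ A, 1 ≤ a i := by
  obtain ⟨t, ht, hnot⟩ := exists_smul_notMem_of_isBounded hA
    (Pi.single_ne_zero_iff.2 one_ne_zero : (Pi.single i 1 : Fin d → ℝ) ≠ 0)
  simp only [Set.mem_ofPred_eq, not_forall, not_le, dot_smul_single] at hnot
  obtain ⟨a, ha, hlt⟩ := hnot
  refine ⟨a, ha, ?_⟩
  have hpos : (0 : ℝ) < a i := by
    by_contra! h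
    linarith [mul_nonpos_of_nonneg_of_nonpos ht h, show t * intCast a i = t * a i from rfl]
  exact_mod_cast hpos

namespace IsLatticePolytope

variable {P : Set (Fin d → ℝ)}

lemma convex (hP : IsLatticePolytope P) : Convex ℝ P := by
  obtain ⟨V, -, rfl⟩ := hP
  exact convex_convexHull ℝ _

lemma isBounded (hP : IsLatticePolytope P) : Bornology.IsBounded P := by
  obtain ⟨V, -, rfl⟩ := hP
  exact ((V : Set (Fin d → ℤ)).toFinite.image intCast).isCompact_convexHull ℝ |>.isBounded

/-- A lattice vertex `v` with `v i ≠ 0` has `|v i| ≥ 1`, so `e i` lies on the segment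
from `0` to `|v i| • e i`. -/
lemma single_mem (hP : IsLatticePolytope P) (huncond : Unconditional P) (h0 : 0 ∈ interior P)
    (i : Fin d) : (Pi.single i 1 : Fin d → ℝ) ∈ P := by
  obtain ⟨V, -, hPV⟩ := id hP
  have hint : (interior (convexHull ℝ (intCast '' (V : Set (Fin d → ℤ))))).Nonempty :=
    hPV ▸ ⟨0, h0⟩
  obtain ⟨_, ⟨v, hv, rfl⟩, hvi⟩ := exists_mem_apply_ne_zero hint i
  have hvP : intCast v ∈ P := hPV ▸ subset_convexHull ℝ _ (Set.mem_image_of_mem _ hv)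
  have hge : (1 : ℝ) ≤ |intCast v i| := by
    simp only [intCast]
    exact_mod_cast Int.one_le_abs (Int.cast_ne_zero.1 hvi : v i ≠ 0)
  have hpos : (0 : ℝ) < |intCast v i| := one_pos.trans_le hge
  have := hP.convex.smul_mem_of_zero_mem (interior_subset h0)
    (huncond.abs_apply_smul_single_mem hP.convex hvP i)
    ⟨inv_nonneg.2 hpos.le, inv_le_one_of_one_le₀ hge⟩
  rwa [smul_smul, inv_mul_cancel₀ hpos.ne', one_smul] at this

end IsLatticePolytope

/-- every unconditional reflexive polytope is sandwiched between
the crosspolytope and the cube. -/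
theorem stmt13 {d : ℕ} (P : Set (Fin d → ℝ)) (hlat : IsLatticePolytope P)
    (huncond : Unconditional P) (hrefl : IsReflexive P) :
    convexHull ℝ {x : Fin d → ℝ | ∃ i, x = Pi.single i 1 ∨ x = -Pi.single i 1} ⊆ P ∧
      P ⊆ {x | ∀ i, |x i| ≤ 1} := by
  obtain ⟨h0, A, hPA⟩ := hrefl
  constructor
  · refine convexHull_min ?_ hlat.convex
    rintro x ⟨i, rfl | rfl⟩
    · exact hlat.single_mem huncond h0 i
    · exact huncond.neg_mem (hlat.single_mem huncond h0 i)
  · intro x hx i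
    obtain ⟨a, ha, hai⟩ := exists_one_le_apply_of_isBounded (hPA ▸ hlat.isBounded) i
    have hax := huncond.abs_apply_smul_single_mem hlat.convex hx i
    rw [hPA] at hax
    have hdot : |x i| * a i ≤ 1 := by simpa [dot_smul_single, intCast] using hax a ha
    have hai' : (1 : ℝ) ≤ a i := by exact_mod_cast hai
    nlinarith [abs_nonneg (x i)]
end

section
/- For a bipartite graph G = (V,E), the matching polytope equals {x ∈ ℝ^E_{≥0} : Σ_{e ∋ v} x_e ≤ 1 for all v ∈ V}. -/
/-!
Extend `x` to the `V × V` matrix with off-diagonal entries `x s(u, w)` and diagonal entries the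
slacks `1 - ∑_{e ∋ u} x e` of the degree constraints. It is symmetric, nonnegative and has unit
row sums, hence doubly stochastic, so Birkhoff's theorem writes it as a convex combination
`∑ w σ • P σ` of permutation matrices. Given a 2-coloring, each permutation `σ` yields the matching
`{s(a, σ a) : a of color false, a ~ σ a}`, and an edge `s(u, v)` with `u` of color false lies in
it exactly when `σ u = v`. Averaging these matchings with the weights `w σ` therefore returns the
`(u, v)` entry of the matrix, which is `x s(u, v)`.
-/

open Finset

/-- A matching: a set of pairwise disjoint edges of `G`. -/
def IsMatchingSet {V : Type*} [Fintype V] [DecidableEq V]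
    (G : SimpleGraph V) [DecidableRel G.Adj] (M : Finset (Sym2 V)) : Prop :=
  M ⊆ G.edgeFinset ∧ ∀ e ∈ M, ∀ f ∈ M, e ≠ f → ∀ v : V, ¬(v ∈ e ∧ v ∈ f)

/-- The matching polytope of `G`, living in `ℝ^{Sym2 V}` and supported on the
edge set: the convex hull of indicator vectors of matchings. -/
def matchingPolytope {V : Type*} [Fintype V] [DecidableEq V]
    (G : SimpleGraph V) [DecidableRel G.Adj] : Set (Sym2 V → ℝ) :=
  convexHull ℝ {x | ∃ M : Finset (Sym2 V), IsMatchingSet G M ∧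
    x = fun e => if e ∈ M then 1 else 0}

lemma exists_sum_perm_ite_eq_of_mem_doublyStochastic {R n : Type*} [Field R] [LinearOrder R]
    [IsStrictOrderedRing R] [Fintype n] [DecidableEq n] {M : Matrix n n R}
    (hM : M ∈ doublyStochastic R n) :
    ∃ w : Equiv.Perm n → R, (∀ σ, 0 ≤ w σ) ∧ ∑ σ, w σ = 1 ∧
      ∀ i j, ∑ σ, w σ * (if σ i = j then 1 else 0) = M i j := by
  obtain ⟨w, hw0, hw1, hwM⟩ := exists_eq_sum_perm_of_mem_doublyStochastic hM
  refine ⟨w, hw0, hw1, fun i j => ?_⟩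
  simp [← hwM, Matrix.sum_apply, Equiv.Perm.permMatrix, PEquiv.toMatrix_apply, eq_comm]

section

variable {V : Type*} [Fintype V] [DecidableEq V] {G : SimpleGraph V} [DecidableRel G.Adj]

variable (G) in
def fractionalMatchingPolytope : Set (Sym2 V → ℝ) :=
  {x | (∀ e, 0 ≤ x e) ∧ (∀ e ∉ G.edgeFinset, x e = 0) ∧
    ∀ v : V, ∑ e ∈ G.edgeFinset.filter (fun e => v ∈ e), x e ≤ 1}

lemma convex_fractionalMatchingPolytope : Convex ℝ (fractionalMatchingPolytope G) := by
  rintro x ⟨hx0, hxE, hxv⟩ y ⟨hy0, hyE, hyv⟩ a b ha hb hab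
  refine ⟨fun e => ?_, fun e he => ?_, fun v => ?_⟩
  · have := hx0 e; have := hy0 e
    simp only [Pi.add_apply, Pi.smul_apply, smul_eq_mul]
    positivity
  · simp [hxE e he, hyE e he]
  · simp only [Pi.add_apply, Pi.smul_apply, smul_eq_mul, sum_add_distrib, ← mul_sum]
    calc _ ≤ a * 1 + b * 1 := by gcongr <;> simp [hxv, hyv]
      _ = 1 := by simp [hab]

lemma IsMatchingSet.indicator_mem_fractionalMatchingPolytope {M : Finset (Sym2 V)}
    (hM : IsMatchingSet G M) :
    (fun e => if e ∈ M then (1 : ℝ) else 0) ∈ fractionalMatchingPolytope G := by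
  refine ⟨fun e => by positivity, fun e he => if_neg fun h => he (hM.1 h), fun v => ?_⟩
  rw [sum_boole, Nat.cast_le_one, card_le_one]
  intro e he f hf
  simp only [mem_filter] at he hf
  by_contra hef
  exact hM.2 e he.2 f hf.2 hef v ⟨he.1.2, hf.1.2⟩

variable (G) in
theorem matchingPolytope_subset_fractionalMatchingPolytope :
    matchingPolytope G ⊆ fractionalMatchingPolytope G :=
  convexHull_min (by rintro _ ⟨M, hM, rfl⟩; exact hM.indicator_mem_fractionalMatchingPolytope)
    convex_fractionalMatchingPolytope

lemma sum_filter_mem_eq_sum_erase {x : Sym2 V → ℝ} (hx : ∀ e ∉ G.edgeFinset, x e = 0) (v : V) :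
    ∑ e ∈ G.edgeFinset.filter (fun e => v ∈ e), x e = ∑ u ∈ univ.erase v, x s(v, u) := by
  rw [← sum_image fun a _ b _ h => Sym2.congr_right.mp h]
  refine sum_subset (fun e he => ?_) fun e he hne => hx e fun hE => hne (mem_filter.2 ⟨hE, ?_⟩)
  · obtain ⟨hE, hv⟩ := mem_filter.1 he
    refine mem_image.2
      ⟨Sym2.Mem.other hv, mem_erase.2 ⟨fun h => ?_, mem_univ _⟩, Sym2.other_spec hv⟩
    rw [← Sym2.other_spec hv, h] at hE
    exact G.not_isDiag_of_mem_edgeSet (G.mem_edgeFinset.1 hE) (Sym2.mk_isDiag_iff.2 rfl)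
  · obtain ⟨u, -, rfl⟩ := mem_image.1 he
    exact Sym2.mem_mk_left v u

variable (G) in
def slackMatrix (x : Sym2 V → ℝ) : Matrix V V ℝ :=
  Matrix.of fun u w =>
    if u = w then 1 - ∑ e ∈ G.edgeFinset.filter (fun e => u ∈ e), x e else x s(u, w)

lemma slackMatrix_comm (x : Sym2 V → ℝ) (u w : V) : slackMatrix G x u w = slackMatrix G x w u := by
  by_cases h : u = w
  · rw [h]
  · simp [slackMatrix, h, Ne.symm h, Sym2.eq_swap]

lemma sum_slackMatrix_row {x : Sym2 V → ℝ} (hx : ∀ e ∉ G.edgeFinset, x e = 0) (u : V) :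
    ∑ w, slackMatrix G x u w = 1 := by
  rw [← add_sum_erase _ _ (mem_univ u)]
  have off_diag : ∑ w ∈ univ.erase u, slackMatrix G x u w = ∑ w ∈ univ.erase u, x s(u, w) :=
    sum_congr rfl fun w hw => by simp [slackMatrix, (ne_of_mem_erase hw).symm]
  rw [off_diag, slackMatrix, Matrix.of_apply, if_pos rfl, sum_filter_mem_eq_sum_erase hx u]
  ring

lemma slackMatrix_mem_doublyStochastic {x : Sym2 V → ℝ} (hx : x ∈ fractionalMatchingPolytope G) :
    slackMatrix G x ∈ doublyStochastic ℝ V := by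
  obtain ⟨hx0, hxE, hxv⟩ := hx
  refine mem_doublyStochastic_iff_sum.2 ⟨fun u w => ?_, sum_slackMatrix_row hxE, fun w => ?_⟩
  · by_cases h : u = w
    · simpa [slackMatrix, h] using hxv w
    · simpa [slackMatrix, h] using hx0 _
  · simpa only [slackMatrix_comm _ _ w] using sum_slackMatrix_row hxE w

end

namespace SimpleGraph.Coloring

variable {V : Type*} {G : SimpleGraph V} (C : G.Coloring Bool)

lemma eq_of_mem_mk_of_color_eq {a b v : V} (hab : G.Adj a b) (hv : v ∈ s(a, b)) (hcv : C v = C a) :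
    v = a := by
  rcases Sym2.mem_iff.1 hv with rfl | rfl
  · rfl
  · exact absurd hcv.symm (C.valid hab)

variable [Fintype V] [DecidableEq V] [DecidableRel G.Adj] {C} {f : V → V}

variable (C) in
def permMatching (f : V → V) : Finset (Sym2 V) :=
  (univ.filter fun a => C a = false ∧ G.Adj a (f a)).image fun a => s(a, f a)

lemma mem_permMatching {e : Sym2 V} :
    e ∈ C.permMatching f ↔ ∃ a, (C a = false ∧ G.Adj a (f a)) ∧ s(a, f a) = e := by
  simp [permMatching]

lemma isMatchingSet_permMatching (hf : f.Injective) : IsMatchingSet G (C.permMatching f) := by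
  refine ⟨fun e he => ?_, ?_⟩
  · obtain ⟨a, ⟨-, ha⟩, rfl⟩ := mem_permMatching.1 he
    exact G.mem_edgeFinset.2 ha
  · rintro _ he _ he' hne v ⟨hv, hv'⟩
    obtain ⟨a, ⟨ca, ha⟩, rfl⟩ := mem_permMatching.1 he
    obtain ⟨b, ⟨cb, hb⟩, rfl⟩ := mem_permMatching.1 he'
    refine hne (congrArg (fun a => s(a, f a)) ?_)
    cases hcv : C v
    · exact (C.eq_of_mem_mk_of_color_eq ha hv (hcv.trans ca.symm)).symm.trans
        (C.eq_of_mem_mk_of_color_eq hb hv' (hcv.trans cb.symm))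
    · have hva : v ≠ a := ne_of_apply_ne C (by rw [hcv, ca]; decide)
      have hvb : v ≠ b := ne_of_apply_ne C (by rw [hcv, cb]; decide)
      exact hf (((Sym2.mem_iff.1 hv).resolve_left hva).symm.trans
        ((Sym2.mem_iff.1 hv').resolve_left hvb))

lemma mk_mem_permMatching_iff {u v : V} (huv : G.Adj u v) (hu : C u = false) :
    s(u, v) ∈ C.permMatching f ↔ f u = v := by
  refine mem_permMatching.trans ⟨?_, fun h => ⟨u, ⟨hu, h ▸ huv⟩, h ▸ rfl⟩⟩
  rintro ⟨a, ⟨ca, -⟩, he⟩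
  rcases Sym2.eq_iff.1 he with ⟨rfl, h⟩ | ⟨rfl, -⟩
  · exact h
  · exact absurd (hu.trans ca.symm) (C.valid huv)

end SimpleGraph.Coloring

open SimpleGraph.Coloring in
theorem fractionalMatchingPolytope_subset_matchingPolytope {V : Type*} [Fintype V]
    [DecidableEq V] {G : SimpleGraph V} [DecidableRel G.Adj] (C : G.Coloring Bool) :
    fractionalMatchingPolytope G ⊆ matchingPolytope G := by
  intro x hx
  obtain ⟨w, hw0, hw1, hw⟩ :=
    exists_sum_perm_ite_eq_of_mem_doublyStochastic (slackMatrix_mem_doublyStochastic hx)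
  refine mem_convexHull_of_exists_fintype w (fun σ e => if e ∈ C.permMatching σ then 1 else 0)
    hw0 hw1 (fun σ => ⟨_, isMatchingSet_permMatching σ.injective, rfl⟩) ?_
  have on_edge : ∀ u v, G.Adj u v → C u = false →
      ∑ σ : Equiv.Perm V, w σ * (if s(u, v) ∈ C.permMatching σ then 1 else 0) = x s(u, v) := by
    intro u v huv hu
    simp_rw [mk_mem_permMatching_iff huv hu, hw u v]
    simp [slackMatrix, huv.ne]
  ext e
  induction e using Sym2.ind with | _ u v => ?_
  simp only [Finset.sum_apply, Pi.smul_apply, smul_eq_mul]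
  by_cases huv : G.Adj u v
  · cases hu : C u
    · exact on_edge u v huv hu
    · rw [Sym2.eq_swap]
      exact on_edge v u huv.symm (by simpa [hu] using (C.valid huv).symm)
  · rw [hx.2.1 _ (by simpa using huv)]
    refine sum_eq_zero fun σ _ => ?_
    rw [if_neg fun h => huv (G.mem_edgeFinset.1 ((isMatchingSet_permMatching σ.injective).1 h)),
      mul_zero]

/-- for a bipartite graph, the matching polytope is given by
nonnegativity, support on edges, and the degree inequalities at each vertex. -/
theorem stmt16 {V : Type*} [Fintype V] [DecidableEq V]
    (G : SimpleGraph V) [DecidableRel G.Adj]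
    (hbip : ∃ c : V → Bool, ∀ u v, G.Adj u v → c u ≠ c v) :
    matchingPolytope G =
      {x | (∀ e, 0 ≤ x e) ∧ (∀ e ∉ G.edgeFinset, x e = 0) ∧
        ∀ v : V, ∑ e ∈ G.edgeFinset.filter (fun e => v ∈ e), x e ≤ 1} := by
  obtain ⟨c, hc⟩ := hbip
  exact (matchingPolytope_subset_fractionalMatchingPolytope G).antisymm
    (fractionalMatchingPolytope_subset_matchingPolytope (.mk c (hc _ _)))
end

section
/- Let G = ([d],E) be a perfect CIS graph, i.e., every inclusion-maximal clique intersects every inclusion-maximal stable set. Then P := conv{1_S : S maximal stable set} and Q := conv{1_C : C maximal clique} form a Gale-dual pair: P = {x ∈ ℝ^d_{≥0} : ⟨x, v⟩ = 1 for every vertex v of Q} and Q = {x ∈ ℝ^d_{≥0} : ⟨x, v⟩ = 1 for every vertex v of P}. -/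
/-!
Perfection enters through Lovász's weighted colouring argument: if every clique has `k`-weight at
most `q`, then `k` is covered exactly by at most `q` stable sets (lower `k v` by one, colour, and
remove a colour class through `v` to drop the maximal clique weight). Colouring `⌊N x⌋` shows that
`x ≥ 0` with `x(C) ≤ 1` on all cliques is a limit of points `⌊N x⌋ / N` of the stable set polytope,
hence lies in it; Fulkerson's anti-blocking duality gives the same for the complement graph.

For such a graph, a point `x ≥ 0` with `x(C) = 1` on every maximal clique `C` is a convex
combination of stable sets, and each stable set used meets every maximal clique, so it is maximal.
Conversely the CIS property gives `|S ∩ C| = 1`. Applied to `G` and to its complement this gives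
both equalities.
-/

open Finset

/-- An inclusion-maximal clique. -/
def IsMaxClique {d : ℕ} (G : SimpleGraph (Fin d)) (C : Finset (Fin d)) : Prop :=
  G.IsClique (C : Set (Fin d)) ∧
    ∀ C' : Finset (Fin d), G.IsClique (C' : Set (Fin d)) → C ⊆ C' → C = C'

/-- An inclusion-maximal stable set. -/
def IsMaxStable {d : ℕ} (G : SimpleGraph (Fin d)) (S : Finset (Fin d)) : Prop :=
  IsStableSet G S ∧ ∀ S' : Finset (Fin d), IsStableSet G S' → S ⊆ S' → S = S'

open Filter Topology

variable {d : ℕ}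

section Graph

variable {G : SimpleGraph (Fin d)}

lemma isStableSet_iff_isIndepSet {s : Finset (Fin d)} :
    IsStableSet G s ↔ G.IsIndepSet (s : Set (Fin d)) :=
  ⟨fun h _ hi _ hj _ => h _ hi _ hj, fun h _ hi _ hj hij => h hi hj (G.ne_of_adj hij) hij⟩

lemma isStableSet_compl (G : SimpleGraph (Fin d)) :
    IsStableSet Gᶜ = fun s : Finset (Fin d) => G.IsClique (s : Set (Fin d)) := by
  ext s
  rw [isStableSet_iff_isIndepSet, SimpleGraph.isIndepSet_compl]

lemma isClique_compl_eq (G : SimpleGraph (Fin d)) :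
    (fun s : Finset (Fin d) => Gᶜ.IsClique (s : Set (Fin d))) = IsStableSet G := by
  ext s
  rw [SimpleGraph.isClique_compl, isStableSet_iff_isIndepSet]

lemma isMaxStable_compl (G : SimpleGraph (Fin d)) : IsMaxStable Gᶜ = IsMaxClique G := by
  ext S
  simp only [IsMaxStable, IsMaxClique, isStableSet_compl]

lemma isMaxClique_compl (G : SimpleGraph (Fin d)) : IsMaxClique Gᶜ = IsMaxStable G := by
  ext C
  simp only [IsMaxStable, IsMaxClique, SimpleGraph.isClique_compl, isStableSet_iff_isIndepSet]

lemma card_inter_le_one_of_isStableSet {s C : Finset (Fin d)} (hs : IsStableSet G s)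
    (hC : G.IsClique (C : Set (Fin d))) : #(s ∩ C) ≤ 1 := by
  refine card_le_one.2 fun a ha b hb => ?_
  rw [mem_inter] at ha hb
  by_contra hab
  exact hs a ha.1 b hb.1 (hC ha.2 hb.2 hab)

lemma exists_isMaxClique_superset {C : Finset (Fin d)} (hC : G.IsClique (C : Set (Fin d))) :
    ∃ C', IsMaxClique G C' ∧ C ⊆ C' := by
  obtain ⟨C', hCC', hmax⟩ :=
    (Set.toFinite {C : Finset (Fin d) | G.IsClique (C : Set (Fin d))}).exists_le_maximal hC
  exact ⟨C', ⟨hmax.1, fun C'' hC'' h => le_antisymm h (hmax.2 hC'' h)⟩, hCC'⟩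

lemma isMaxStable_of_forall_inter_nonempty {S : Finset (Fin d)} (hS : IsStableSet G S)
    (h : ∀ C, IsMaxClique G C → (C ∩ S).Nonempty) : IsMaxStable G S := by
  refine ⟨hS, fun S' hS' hSS' => hSS'.antisymm fun v hv => ?_⟩
  obtain ⟨C, hC, hvC⟩ := exists_isMaxClique_superset (G := G) (C := {v}) (by simp)
  obtain ⟨u, hu⟩ := h C hC
  rw [mem_inter] at hu
  by_contra hvS
  exact hS' u (hSS' hu.2) v hv
    (hC.1 hu.1 (hvC (mem_singleton_self v)) (ne_of_mem_of_not_mem hu.2 hvS))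

end Graph

section Polytope

def indicatorPolytope (p : Finset (Fin d) → Prop) : Set (Fin d → ℝ) :=
  convexHull ℝ {x | ∃ s, p s ∧ x = indVec s}

-- for the cliques of a graph this is its fractional stable set polytope `QSTAB`
def antiblocker (p : Finset (Fin d) → Prop) : Set (Fin d → ℝ) :=
  {x | x ∈ nonnegOrthant d ∧ ∀ s, p s → ∑ i ∈ s, x i ≤ 1}

lemma indVec_dotProduct (s : Finset (Fin d)) (x : Fin d → ℝ) :
    indVec s ⬝ᵥ x = ∑ i ∈ s, x i := by
  simp [dotProduct, indVec]

lemma indVec_dotProduct_indVec (s t : Finset (Fin d)) : indVec s ⬝ᵥ indVec t = #(s ∩ t) := by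
  simp [indVec_dotProduct, indVec]

lemma isClosed_indicatorPolytope (p : Finset (Fin d) → Prop) :
    IsClosed (indicatorPolytope p) :=
  have hfin : {x | ∃ s, p s ∧ x = indVec s}.Finite :=
    (Set.finite_range indVec).subset fun _ ⟨s, _, hs⟩ => ⟨s, hs.symm⟩
  (hfin.isCompact_convexHull (𝕜 := ℝ)).isClosed

lemma extremePoints_indicatorPolytope (p : Finset (Fin d) → Prop) :
    (indicatorPolytope p).extremePoints ℝ = {x | ∃ s, p s ∧ x = indVec s} := by
  refine extremePoints_convexHull_subset.antisymm fun x hx => ?_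
  have hcube : indicatorPolytope p ⊆ Set.univ.pi fun _ => Set.Icc 0 1 :=
    convexHull_min (by rintro _ ⟨s, -, rfl⟩ i -; unfold indVec; split_ifs <;> simp)
      (convex_pi fun _ _ => convex_Icc 0 1)
  refine inter_extremePoints_subset_extremePoints_of_subset hcube ⟨subset_convexHull ℝ _ hx, ?_⟩
  obtain ⟨s, -, rfl⟩ := hx
  rw [extremePoints_pi]
  intro i _
  rw [Set.extremePoints_Icc zero_le_one]
  unfold indVec
  split_ifs <;> simp

lemma mem_convexHull_setOf_forall_eq_one {E ι : Type*} [AddCommGroup E] [Module ℝ E] {F : Set E}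
    {φ : ι → E →ₗ[ℝ] ℝ} {x : E} (hx : x ∈ convexHull ℝ F) (hF : ∀ j, ∀ z ∈ F, φ j z ≤ 1)
    (hφx : ∀ j, φ j x = 1) : x ∈ convexHull ℝ {z ∈ F | ∀ j, φ j z = 1} := by
  classical
  rw [_root_.convexHull_eq] at hx
  obtain ⟨κ, t, w, z, hw0, hw1, hzF, rfl⟩ := hx
  have htight : ∀ i ∈ t, w i ≠ 0 → ∀ j, φ j (z i) = 1 := by
    intro i hi hwi j
    have hle : ∀ i ∈ t, w i * φ j (z i) ≤ w i :=
      fun i hi => mul_le_of_le_one_right (hw0 i hi) (hF j _ (hzF i hi))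
    have hsum : ∑ i ∈ t, w i * φ j (z i) = ∑ i ∈ t, w i := by
      rw [hw1, ← hφx j, t.centerMass_eq_of_sum_1 z hw1, map_sum]
      simp only [map_smul, smul_eq_mul]
    have := (sum_eq_sum_iff_of_le hle).1 hsum i hi
    exact (mul_eq_left₀ hwi).1 this
  rw [← t.centerMass_filter_ne_zero]
  refine centerMass_mem_convexHull _ (fun i hi => hw0 i (mem_filter.1 hi).1) ?_ fun i hi => ?_
  · rw [sum_filter_ne_zero, hw1]
    exact one_pos
  · obtain ⟨hi, hwi⟩ := mem_filter.1 hi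
    exact ⟨hzF i hi, htight i hi hwi⟩

lemma Convex.inv_natCast_smul_multiset_sum_mem {E : Type*} [AddCommGroup E] [Module ℝ E]
    {K : Set E} (hK : Convex ℝ K) (h0 : 0 ∈ K) {M : Multiset E} (hM : ∀ x ∈ M, x ∈ K) {N : ℕ}
    (hN : Multiset.card M ≤ N) : (N : ℝ)⁻¹ • M.sum ∈ K := by
  classical
  rcases M.empty_or_exists_mem with rfl | ⟨y, hy⟩
  · simpa using h0
  have hcard : (0 : ℝ) < Multiset.card M := by
    exact_mod_cast Multiset.card_pos_iff_exists_mem.2 ⟨y, hy⟩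
  have hcentroid : (Multiset.card M : ℝ)⁻¹ • M.sum ∈ K := by
    have := hK.centerMass_mem (t := univ) (w := fun _ : M => (1 : ℝ)) (z := fun x => (x : E))
      (fun _ _ => zero_le_one) (by simpa using hcard) fun x _ => hM x (Multiset.coe_mem)
    simpa [centerMass, ← Multiset.sum_eq_sum_coe] using this
  convert hK.smul_mem_of_zero_mem h0 hcentroid (t := Multiset.card M / N)
    ⟨by positivity, div_le_one_of_le₀ (by exact_mod_cast hN) (Nat.cast_nonneg N)⟩ using 1
  rw [smul_smul]
  congr 1
  field_simp

lemma multiset_sum_map_indVec_apply (M : Multiset (Finset (Fin d))) (i : Fin d) :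
    (M.map indVec).sum i = M.countP (i ∈ ·) := by
  induction M using Multiset.induction_on with
  | empty => simp
  | cons s M ih =>
    simp only [Multiset.map_cons, Multiset.sum_cons, Pi.add_apply, ih, Multiset.countP_cons,
      indVec]
    push_cast
    ring

end Polytope

section Antiblocking

lemma indicatorPolytope_subset_dotProduct_le {p : Finset (Fin d) → Prop} {y : Fin d → ℝ}
    (hy : y ∈ antiblocker p) : indicatorPolytope p ⊆ {x | y ⬝ᵥ x ≤ 1} := by
  refine convexHull_min ?_ (convex_halfSpace_le (dotProductBilin ℝ ℝ y).isLinear 1)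
  rintro _ ⟨s, hs, rfl⟩
  rw [Set.mem_ofPred_eq, dotProduct_comm, indVec_dotProduct]
  exact hy.2 s hs

/-- Fulkerson's anti-blocking duality. -/
theorem antiblocker_subset_indicatorPolytope {p q : Finset (Fin d) → Prop}
    (hp : ∀ s t, s ⊆ t → p t → p s) (hp₀ : p ∅)
    (hpq : antiblocker p ⊆ indicatorPolytope q) : antiblocker q ⊆ indicatorPolytope p := by
  classical
  intro y hy
  by_contra hyp
  obtain ⟨f, u, hfu, huf⟩ :=
    geometric_hahn_banach_closed_point (convex_convexHull ℝ _) (isClosed_indicatorPolytope p) hyp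
  set c : Fin d → ℝ := fun i => f fun j => if i = j then 1 else 0
  have hf : ∀ z, f z = z ⬝ᵥ c := fun z => by
    simpa [dotProduct, c] using LinearMap.pi_apply_eq_sum_univ f.toLinearMap z
  set cpos : Fin d → ℝ := fun i => max (c i) 0
  -- `∑ i ∈ s, cpos i = f (indVec {i ∈ s | 0 ≤ c i})`, and that subset of `s` is again in `p`
  have hcpos : ∀ s, p s → ∑ i ∈ s, cpos i < u := by
    intro s hs
    have hmem : indVec {i ∈ s | 0 ≤ c i} ∈ indicatorPolytope p :=
      subset_convexHull ℝ _ ⟨_, hp _ s (filter_subset _ _) hs, rfl⟩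
    have := hfu _ hmem
    rw [hf, indVec_dotProduct, sum_filter] at this
    simpa only [cpos, max_def'] using this
  have hu : 0 < u := by simpa using hcpos ∅ hp₀
  have hx : u⁻¹ • cpos ∈ antiblocker p := by
    refine ⟨fun i => mul_nonneg (inv_nonneg.2 hu.le) (le_max_right _ _), fun s hs => ?_⟩
    simp only [Pi.smul_apply, smul_eq_mul, ← mul_sum]
    rw [inv_mul_le_iff₀ hu, mul_one]
    exact (hcpos s hs).le
  have h₁ := indicatorPolytope_subset_dotProduct_le hy (hpq hx)
  rw [Set.mem_ofPred_eq, dotProduct_smul, smul_eq_mul, inv_mul_le_iff₀ hu, mul_one] at h₁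
  have h₂ : y ⬝ᵥ c ≤ y ⬝ᵥ cpos :=
    sum_le_sum fun i _ => mul_le_mul_of_nonneg_left (le_max_left _ _) (hy.1 i)
  rw [hf] at huf
  linarith [dotProduct_comm y c]

end Antiblocking

section WeightedColoring

variable {G : SimpleGraph (Fin d)}

def IsWeightedColoring (G : SimpleGraph (Fin d)) (k : Fin d → ℕ)
    (M : Multiset (Finset (Fin d))) : Prop :=
  (∀ s ∈ M, IsStableSet G s) ∧ ∀ i, M.countP (i ∈ ·) = k i

def CliqueWeightLE (G : SimpleGraph (Fin d)) (k : Fin d → ℕ) (q : ℕ) : Prop :=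
  ∀ C : Finset (Fin d), G.IsClique (C : Set (Fin d)) → ∑ i ∈ C, k i ≤ q

lemma sum_countP_mem_of_isClique {C : Finset (Fin d)} (hC : G.IsClique (C : Set (Fin d)))
    {M : Multiset (Finset (Fin d))} (hM : ∀ s ∈ M, IsStableSet G s) :
    ∑ i ∈ C, M.countP (i ∈ ·) = M.countP fun s => (C ∩ s).Nonempty := by
  induction M using Multiset.induction_on with
  | empty => simp
  | cons s M ih =>
    rw [Multiset.forall_mem_cons] at hM
    simp only [Multiset.countP_cons, sum_add_distrib, ih hM.2, sum_boole, filter_mem_eq_inter]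
    have := card_inter_le_one_of_isStableSet hM.1 hC
    rw [inter_comm] at this
    rcases (C ∩ s).eq_empty_or_nonempty with h | h
    · simp [h]
    · simp [h, le_antisymm this (card_pos.2 h)]

lemma IsWeightedColoring.exists_mem {k : Fin d → ℕ} {M : Multiset (Finset (Fin d))}
    (hM : IsWeightedColoring G k M) {i : Fin d} (hi : 0 < k i) : ∃ s ∈ M, i ∈ s :=
  Multiset.countP_pos.1 ((hM.2 i).symm ▸ hi)

lemma IsWeightedColoring.cons {k : Fin d → ℕ} {M : Multiset (Finset (Fin d))}
    (hM : IsWeightedColoring G k M) {s : Finset (Fin d)} (hs : IsStableSet G s) :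
    IsWeightedColoring G (fun i => k i + if i ∈ s then 1 else 0) (s ::ₘ M) :=
  ⟨Multiset.forall_mem_cons.2 ⟨hs, hM.1⟩, fun i => by rw [Multiset.countP_cons, hM.2 i]⟩

lemma IsPerfect.colorable_induce (hG : IsPerfect G) (A : Set (Fin d)) {q : ℕ}
    (hq : ∀ C : Finset (Fin d), G.IsClique (C : Set (Fin d)) → (C : Set (Fin d)) ⊆ A → #C ≤ q) :
    (G.induce A).Colorable q := by
  rw [← SimpleGraph.chromaticNumber_le_iff_colorable, ← hG A]
  refine sSup_le ?_
  rintro _ ⟨m, t, rfl, ht⟩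
  rw [SimpleGraph.isNClique_induce_iff] at ht
  have hsub : (t.map (.subtype _) : Set (Fin d)) ⊆ A := fun x hx => by
    obtain ⟨y, -, rfl⟩ := mem_map.1 hx
    exact y.2
  exact_mod_cast ht.2 ▸ hq _ ht.1 hsub

lemma IsPerfect.exists_weightedColoring_of_le_one (hG : IsPerfect G) {k : Fin d → ℕ} {q : ℕ}
    (hk : ∀ i, k i ≤ 1) (hkq : CliqueWeightLE G k q) :
    ∃ M, IsWeightedColoring G k M ∧ Multiset.card M ≤ q := by
  classical
  set A : Set (Fin d) := {i | k i = 1}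
  obtain ⟨c⟩ := hG.colorable_induce A fun C hC hCA => by
    calc #C = ∑ i ∈ C, k i := by
          rw [card_eq_sum_ones]
          exact sum_congr rfl fun i hi => (hCA hi).symm
      _ ≤ q := hkq C hC
  set cls : Fin q → Finset (Fin d) := fun j => {i | ∃ h : i ∈ A, c ⟨i, h⟩ = j}
  refine ⟨univ.val.map cls, ⟨?_, fun i => ?_⟩, by simp⟩
  · simp only [Multiset.mem_map, mem_val, mem_univ, true_and, forall_exists_index]
    rintro _ j rfl a ha b hb hab
    simp only [cls, mem_filter, mem_univ, true_and] at ha hb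
    obtain ⟨ha, rfl⟩ := ha
    obtain ⟨hb, hcb⟩ := hb
    exact c.valid (by simpa using hab) hcb.symm
  · rw [Multiset.countP_map]
    by_cases hi : i ∈ A
    · simp only [cls, hi, mem_filter, mem_univ, true_and, exists_true_left]
      rw [Multiset.filter_eq, Multiset.card_replicate,
        Multiset.count_eq_one_of_mem univ.nodup (mem_univ _)]
      exact hi.symm
    · have hki : k i ≠ 1 := hi
      simp only [cls, hi, mem_filter, mem_univ, true_and, IsEmpty.exists_iff, Multiset.filter_false,
        Multiset.card_zero]
      have := hk i
      omega

lemma cliqueWeightLE_sub_indicator {k : Fin d → ℕ} {q : ℕ} (hkq : CliqueWeightLE G k q)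
    {v : Fin d} {M : Multiset (Finset (Fin d))}
    (hM : IsWeightedColoring G (Function.update k v (k v - 1)) M) (hMq : Multiset.card M ≤ q)
    {s : Finset (Fin d)} (hs : s ∈ M) (hvs : v ∈ s) (hks : ∀ i ∈ s, 1 ≤ k i) :
    CliqueWeightLE G (fun i => k i - if i ∈ s then 1 else 0) (q - 1) := by
  intro C hC
  show ∑ i ∈ C, (k i - if i ∈ s then 1 else 0) ≤ q - 1
  have hsplit : ∑ i ∈ C, (k i - if i ∈ s then 1 else 0) + #(C ∩ s) = ∑ i ∈ C, k i := by
    rw [← filter_mem_eq_inter, card_filter, ← sum_add_distrib]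
    refine sum_congr rfl fun i _ => ?_
    split_ifs with h
    exacts [Nat.sub_add_cancel (hks i h), rfl]
  rcases (C ∩ s).eq_empty_or_nonempty with hCs | hCs
  · -- `C` misses the class `s ∋ v`, so its weight is the number of classes it meets
    have hvC : v ∉ C := fun hv => (eq_empty_iff_forall_notMem.1 hCs) v (mem_inter.2 ⟨hv, hvs⟩)
    have hweight : ∑ i ∈ C, k i = M.countP fun t => (C ∩ t).Nonempty := by
      rw [← sum_countP_mem_of_isClique hC hM.1]
      exact sum_congr rfl fun i hi => by
        rw [hM.2 i, Function.update_of_ne (ne_of_mem_of_not_mem hi hvC)]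
    have hlt : M.countP (fun t => (C ∩ t).Nonempty) < Multiset.card M := by
      refine (Multiset.countP_le_card _ _).lt_of_ne fun h => ?_
      simpa [hCs] using Multiset.countP_eq_card.1 h s hs
    rw [hCs, card_empty, add_zero] at hsplit
    omega
  · have := hkq C hC
    have := card_pos.2 hCs
    omega

theorem IsPerfect.exists_weightedColoring (hG : IsPerfect G) (k : Fin d → ℕ) {q : ℕ}
    (hkq : CliqueWeightLE G k q) : ∃ M, IsWeightedColoring G k M ∧ Multiset.card M ≤ q := by
  induction hm : ∑ i, (k i - 1) using Nat.strong_induction_on generalizing k q with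
  | _ m ih =>
  by_cases hk : ∀ i, k i ≤ 1
  · exact hG.exists_weightedColoring_of_le_one hk hkq
  push Not at hk
  obtain ⟨v, hv⟩ := hk
  have hmono : ∀ {k₁ k₂ : Fin d → ℕ}, k₁ ≤ k₂ → ∑ i, (k₁ i - 1) ≤ ∑ i, (k₂ i - 1) :=
    fun h => sum_le_sum fun i _ => Nat.sub_le_sub_right (h i) 1
  set k' := Function.update k v (k v - 1)
  have hk'k : k' ≤ k := fun i => by
    rcases eq_or_ne i v with rfl | h
    · simp [k']
    · simp [k', h]
  have hk'm : ∑ i, (k' i - 1) < m := hm ▸ sum_lt_sum (fun i _ => Nat.sub_le_sub_right (hk'k i) 1)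
      ⟨v, mem_univ v, by simp only [k', Function.update_self]; omega⟩
  obtain ⟨M, hM, hMq⟩ :=
    ih _ hk'm k' (fun C hC => (sum_le_sum fun i _ => hk'k i).trans (hkq C hC)) rfl
  obtain ⟨s, hs, hvs⟩ := hM.exists_mem (i := v) (by simp only [k', Function.update_self]; omega)
  have hks : ∀ i ∈ s, 1 ≤ k i := fun i hi =>
    ((Multiset.countP_pos.2 ⟨s, hs, hi⟩).trans_eq (hM.2 i)).trans_le (hk'k i)
  set k'' := fun i => k i - if i ∈ s then 1 else 0
  have hk''k' : k'' ≤ k' := fun i => by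
    rcases eq_or_ne i v with rfl | h
    · simp [k'', k', hvs]
    · simp only [k'', k', Function.update_of_ne h]; omega
  obtain ⟨M', hM', hM'q⟩ := ih _ ((hmono hk''k').trans_lt hk'm) k''
    (cliqueWeightLE_sub_indicator hkq hM hMq hs hvs hks) rfl
  refine ⟨s ::ₘ M', ?_, ?_⟩
  · convert hM'.cons (hM.1 s hs) using 1
    funext i
    simp only [k'']
    split_ifs with h
    exacts [(Nat.sub_add_cancel (hks i h)).symm, rfl]
  · have := Multiset.card_pos_iff_exists_mem.2 ⟨s, hs⟩
    rw [Multiset.card_cons]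
    omega

end WeightedColoring

section Perfect

variable {G : SimpleGraph (Fin d)}

lemma IsWeightedColoring.div_mem_stableSetPolytope {k : Fin d → ℕ}
    {M : Multiset (Finset (Fin d))} (hM : IsWeightedColoring G k M) {N : ℕ}
    (hN : Multiset.card M ≤ N) : (fun i => (k i : ℝ) / N) ∈ stableSetPolytope G := by
  have h0 : (0 : Fin d → ℝ) ∈ stableSetPolytope G :=
    subset_convexHull ℝ {x | ∃ s, IsStableSet G s ∧ x = indVec s}
      ⟨∅, fun i hi => by simp at hi, by ext; simp [indVec]⟩
  have hsum : (fun i => (k i : ℝ) / N) = (N : ℝ)⁻¹ • (M.map indVec).sum := by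
    funext i
    simp [multiset_sum_map_indVec_apply, hM.2 i, div_eq_inv_mul]
  rw [hsum]
  refine (convex_convexHull ℝ _).inv_natCast_smul_multiset_sum_mem h0 ?_ (by simpa using hN)
  simpa using fun s hs =>
    subset_convexHull ℝ {x | ∃ s, IsStableSet G s ∧ x = indVec s} ⟨s, hM.1 s hs, rfl⟩

theorem IsPerfect.antiblocker_subset_stableSetPolytope (hG : IsPerfect G) :
    antiblocker (fun C => G.IsClique (C : Set (Fin d))) ⊆ stableSetPolytope G := by
  intro x hx
  have hlim : Tendsto (fun N : ℕ => fun i => (⌊x i * N⌋₊ : ℝ) / N) atTop (𝓝 x) :=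
    tendsto_pi_nhds.2 fun i =>
      (tendsto_nat_floor_mul_div_atTop (hx.1 i)).comp tendsto_natCast_atTop_atTop
  refine (isClosed_indicatorPolytope _).mem_of_tendsto hlim (Eventually.of_forall fun N => ?_)
  have hkN : CliqueWeightLE G (fun i => ⌊x i * N⌋₊) N := fun C hC => by
    have : ∑ i ∈ C, (⌊x i * N⌋₊ : ℝ) ≤ N := calc
      _ ≤ ∑ i ∈ C, x i * N := sum_le_sum fun i _ => Nat.floor_le (mul_nonneg (hx.1 i) N.cast_nonneg)
      _ = (∑ i ∈ C, x i) * N := (sum_mul ..).symm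
      _ ≤ N := mul_le_of_le_one_left N.cast_nonneg (hx.2 C hC)
    exact_mod_cast this
  obtain ⟨M, hM, hMN⟩ := hG.exists_weightedColoring _ hkN
  exact hM.div_mem_stableSetPolytope hMN

end Perfect

lemma convex_setOf_nonneg_dot_eq_one (Y : Set (Fin d → ℝ)) :
    Convex ℝ {x | x ∈ nonnegOrthant d ∧ ∀ y ∈ Y, dot x y = 1} := by
  intro x hx z hz a b ha hb hab
  refine ⟨fun i => ?_, fun y hy => ?_⟩
  · have := hx.1 i
    have := hz.1 i
    simp only [Pi.add_apply, Pi.smul_apply, smul_eq_mul]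
    positivity
  · change (a • x + b • z) ⬝ᵥ y = 1
    rw [add_dotProduct, smul_dotProduct, smul_dotProduct]
    change a * dot x y + b * dot z y = 1
    rw [hx.2 y hy, hz.2 y hy, mul_one, mul_one, hab]

theorem indicatorPolytope_isMaxStable_eq {H : SimpleGraph (Fin d)}
    (hH : antiblocker (fun C => H.IsClique (C : Set (Fin d))) ⊆ stableSetPolytope H)
    (hCIS : ∀ C S, IsMaxClique H C → IsMaxStable H S → (C ∩ S).Nonempty) :
    indicatorPolytope (IsMaxStable H) =
      {x | x ∈ nonnegOrthant d ∧
        ∀ y ∈ (indicatorPolytope (IsMaxClique H)).extremePoints ℝ, dot x y = 1} := by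
  rw [extremePoints_indicatorPolytope]
  refine (convexHull_min ?_ (convex_setOf_nonneg_dot_eq_one _)).antisymm fun x ⟨hx0, hx1⟩ => ?_
  · rintro _ ⟨S, hS, rfl⟩
    refine ⟨fun i => by unfold indVec; split_ifs <;> norm_num, ?_⟩
    rintro _ ⟨C, hC, rfl⟩
    have hle := card_inter_le_one_of_isStableSet hS.1 hC.1
    have hpos := card_pos.2 (hCIS C S hC hS)
    rw [inter_comm] at hpos
    change indVec S ⬝ᵥ indVec C = 1
    rw [indVec_dotProduct_indVec]
    exact_mod_cast le_antisymm hle hpos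
  have hxC : ∀ C, IsMaxClique H C → ∑ i ∈ C, x i = 1 := fun C hC => by
    rw [← indVec_dotProduct, dotProduct_comm]
    exact hx1 _ ⟨C, hC, rfl⟩
  have hxQ : x ∈ antiblocker fun C => H.IsClique (C : Set (Fin d)) := by
    refine ⟨hx0, fun C hC => ?_⟩
    obtain ⟨C', hC', hCC'⟩ := exists_isMaxClique_superset hC
    exact (sum_le_sum_of_subset_of_nonneg hCC' fun i _ _ => hx0 i).trans (hxC C' hC').le
  have hface := mem_convexHull_setOf_forall_eq_one (hH hxQ)
    (φ := fun C : {C // IsMaxClique H C} => dotProductBilin ℝ ℝ (indVec C.1))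
    (by
      rintro ⟨C, hC⟩ _ ⟨s, hs, rfl⟩
      have := card_inter_le_one_of_isStableSet hs hC.1
      simp only [dotProductBilin_apply_apply, indVec_dotProduct_indVec, inter_comm C]
      exact_mod_cast this)
    fun ⟨C, hC⟩ => by simp [indVec_dotProduct, hxC C hC]
  refine convexHull_mono ?_ hface
  rintro _ ⟨⟨s, hs, rfl⟩, hsC⟩
  refine ⟨s, isMaxStable_of_forall_inter_nonempty hs fun C hC => card_pos.1 ?_, rfl⟩
  have := hsC ⟨C, hC⟩
  simp only [dotProductBilin_apply_apply, indVec_dotProduct_indVec] at this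
  exact_mod_cast this.ge

/-- for a perfect CIS graph, the convex hulls of indicators of
maximal stable sets and of maximal cliques form a Gale-dual pair. -/
theorem stmt18 {d : ℕ} (G : SimpleGraph (Fin d)) (hG : IsPerfect G)
    (hCIS : ∀ C S : Finset (Fin d), IsMaxClique G C → IsMaxStable G S →
      (C ∩ S).Nonempty) :
    (convexHull ℝ {x | ∃ S : Finset (Fin d), IsMaxStable G S ∧ x = indVec S} =
      {x | x ∈ nonnegOrthant d ∧
        ∀ y ∈ Set.extremePoints ℝ
          (convexHull ℝ {x | ∃ C : Finset (Fin d), IsMaxClique G C ∧ x = indVec C}),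
          dot x y = 1}) ∧
    (convexHull ℝ {x | ∃ C : Finset (Fin d), IsMaxClique G C ∧ x = indVec C} =
      {x | x ∈ nonnegOrthant d ∧
        ∀ y ∈ Set.extremePoints ℝ
          (convexHull ℝ {x | ∃ S : Finset (Fin d), IsMaxStable G S ∧ x = indVec S}),
          dot x y = 1}) := by
  have hQSTAB := hG.antiblocker_subset_stableSetPolytope
  have hQSTABc : antiblocker (fun C => Gᶜ.IsClique (C : Set (Fin d))) ⊆ stableSetPolytope Gᶜ := by
    rw [isClique_compl_eq, stableSetPolytope, isStableSet_compl]
    exact antiblocker_subset_indicatorPolytope (fun s t hst ht => ht.subset (coe_subset.2 hst))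
      (by simp) hQSTAB
  have hCISc : ∀ C S, IsMaxClique Gᶜ C → IsMaxStable Gᶜ S → (C ∩ S).Nonempty := by
    rw [isMaxClique_compl, isMaxStable_compl]
    exact fun C S hC hS => inter_comm C S ▸ hCIS S C hS hC
  have hdual := indicatorPolytope_isMaxStable_eq hQSTABc hCISc
  rw [isMaxStable_compl, isMaxClique_compl] at hdual
  exact ⟨indicatorPolytope_isMaxStable_eq hQSTAB hCIS, hdual⟩
end
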